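/- Let d, P, C, k ≥ 1 be integers with k ≤ d, let z ∈ ℝ^d, let q ∈ {1,…,d}, and let H ⊆ {1,…,d} be a set of k coordinates such that |z_i| ≥ |z_j| for all i ∈ H and j ∉ H. For the random count-mean sketch with parameters (P, C), define E_H = (1/P) Σ_{j∈H, j≠q} Σ_{p=1}^P s_p(j)s_p(q)·1[h_p(j)=h_p(q)]·z_j and E_T = (1/P) Σ_{j∉H, j≠q} Σ_{p=1}^P s_p(j)s_p(q)·1[h_p(j)=h_p(q)]·z_j, so that (SᵀSz)_q − z_q = E_H + E_T. Then: (i) P(E_H ≠ 0) ≤ Pk/C; (ii) E[E_T] = 0 and E[E_T²] ≤ ‖z_tail(k)‖²/(PC). -/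

import Mathlib

/-!
For `j ≠ q`, coordinate `j` contributes `(1/P) ∑_p s_p(j) s_p(q) 1[h_p(j) = h_p(q)] z_j` to
`(SᵀSz)_q`, while `j = q` contributes exactly `z_q`. The heavy error can be nonzero only if one of
the at most `kP` collisions `h_p(j) = h_p(q)`, `j ∈ H`, occurs, and each has probability `1/C`:
shifting `h_p(j)` by `c` is a bijection, so `h_p(j) - h_p(q)` is uniform on `ℤ/C`. Flipping the
sign `s_p(j)` is a measure-preserving involution that negates the `(j, p)` term and fixes all
others, so the terms have mean zero and are pairwise orthogonal; hence
`E[E_T²] = P⁻² ∑_{j ∉ H, p} z_j² / C`. Finally, zeroing out a top-`k` set `H` is an optimal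
`k`-sparse approximation, so `∑_{j ∉ H} z_j² ≤ ‖z_tail(k)‖²`.
-/

open MeasureTheory ProbabilityTheory
open scoped ENNReal NNReal

noncomputable section

/-- Uniform probability measure on a finite type. -/
def unifMeasure (α : Type*) [Fintype α] [MeasurableSpace α] : Measure α :=
  (Fintype.card α : ℝ≥0∞)⁻¹ • Measure.count

/-- Randomness of a count-mean sketch with parameters `(P, C)` on `ℝ^d`:
for each `p : Fin P` a hash function `h_p : Fin d → Fin C` and sign bits `s_p : Fin d → Bool`,
all mutually independent and uniform (hence jointly: the uniform measure on this type). -/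
abbrev SketchSpace (d P C : ℕ) : Type :=
  (Fin P → Fin d → Fin C) × (Fin P → Fin d → Bool)

/-- Sign associated to a boolean. -/
def sgn (b : Bool) : ℝ := if b then 1 else -1

/-- The count-mean sketch `S z ∈ ℝ^{P×C}`:
`(S z)_{(p,c)} = (1/√P) ∑ i, s_p(i)·1[h_p(i)=c]·z_i`. -/
def Sk {d P C : ℕ} (ω : SketchSpace d P C) (z : Fin d → ℝ) : Fin P × Fin C → ℝ :=
  fun pc => (Real.sqrt P)⁻¹ *
    ∑ i : Fin d, sgn (ω.2 pc.1 i) * (if ω.1 pc.1 i = pc.2 then (1 : ℝ) else 0) * z i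

/-- `Sᵀ y ∈ ℝ^d`: `(Sᵀ y)_q = (1/√P) ∑ p, s_p(q)·y_{(p, h_p(q))}`. -/
def SkT {d P C : ℕ} (ω : SketchSpace d P C) (y : Fin P × Fin C → ℝ) : Fin d → ℝ :=
  fun q => (Real.sqrt P)⁻¹ * ∑ p : Fin P, sgn (ω.2 p q) * y (p, ω.1 p q)

/-- Euclidean (ℓ₂) norm on `ℝ^d`. -/
def norm2 {d : ℕ} (z : Fin d → ℝ) : ℝ := Real.sqrt (∑ i, (z i) ^ 2)

/-- `w` has at most `k` nonzero coordinates. -/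
def sparse {d : ℕ} (k : ℕ) (w : Fin d → ℝ) : Prop :=
  ∃ I : Finset (Fin d), I.card ≤ k ∧ ∀ i ∉ I, w i = 0

/-- The tail norm `‖z_tail(k)‖`: the minimum of `‖z - w‖₂` over `k`-sparse `w`. -/
def tailNorm {d : ℕ} (k : ℕ) (z : Fin d → ℝ) : ℝ :=
  sInf {t : ℝ | ∃ w : Fin d → ℝ, sparse k w ∧ t = norm2 (fun i => z i - w i)}

/-- `w` is a top-`m` truncation of `v`: it keeps the entries of `v` on a set `I` of `m`
coordinates of largest absolute value and zeroes out the rest. -/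
def IsTopTrunc {d : ℕ} (m : ℕ) (v w : Fin d → ℝ) : Prop :=
  ∃ I : Finset (Fin d), I.card = m ∧ (∀ i ∈ I, ∀ j ∉ I, |v j| ≤ |v i|) ∧
    (∀ i ∈ I, w i = v i) ∧ ∀ i ∉ I, w i = 0

/-- Symmetric median: the midpoint of the `⌈R/2⌉`-th and `(⌊R/2⌋+1)`-th smallest entries. -/
def med {R : ℕ} (x : Fin R → ℝ) : ℝ :=
  if h : R = 0 then 0
  else (x (Tuple.sort x ⟨(R + 1) / 2 - 1, by omega⟩) + x (Tuple.sort x ⟨R / 2, by omega⟩)) / 2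

/-- Randomness of a count-median-of-means sketch: `R` independent count-mean sketches. -/
abbrev MoMSpace (d P C R : ℕ) : Type := Fin R → SketchSpace d P C

/-- Median-of-means unsketching: `U(y)_q = med_r ((S^{(r)})ᵀ y^{(r)})_q`. -/
def MoMU {d P C R : ℕ} (ω : MoMSpace d P C R) (y : Fin R → Fin P × Fin C → ℝ) : Fin d → ℝ :=
  fun q => med fun r => SkT (ω r) (y r) q

open Finset

section UniformMeasure

variable {X : Type*} [Fintype X] [MeasurableSpace X] [MeasurableSingletonClass X]

lemma unifMeasure_coe_finset (s : Finset X) :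
    unifMeasure X s = (Fintype.card X : ℝ≥0∞)⁻¹ * s.card := by
  rw [unifMeasure, Measure.smul_apply, Measure.count_apply_finset, smul_eq_mul]

instance isProbabilityMeasure_unifMeasure [Nonempty X] : IsProbabilityMeasure (unifMeasure X) := by
  constructor
  rw [← coe_univ, unifMeasure_coe_finset, card_univ,
    ENNReal.inv_mul_cancel (Nat.cast_ne_zero.2 Fintype.card_ne_zero) (ENNReal.natCast_ne_top _)]

lemma integral_unifMeasure (f : X → ℝ) :
    ∫ x, f x ∂unifMeasure X = (Fintype.card X : ℝ)⁻¹ * ∑ x, f x := by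
  simp [unifMeasure, integral_smul_measure]

end UniformMeasure

lemma Finset.sum_le_sum_of_card_le_of_forall_le {ι M : Type*} [DecidableEq ι] [AddCommMonoid M]
    [LinearOrder M] [IsOrderedAddMonoid M] {f : ι → M}
    (hf : ∀ i, 0 ≤ f i) {I H : Finset ι} (hcard : #I ≤ #H)
    (htop : ∀ i ∈ H, ∀ j ∉ H, f j ≤ f i) : ∑ i ∈ I, f i ≤ ∑ i ∈ H, f i := by
  rcases (H \ I).eq_empty_or_nonempty with hHI | hHI
  · have hIH : I \ H = ∅ := by
      rw [← card_eq_zero, ← Nat.le_zero, ← card_empty, ← hHI, card_sdiff_le_card_sdiff_iff]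
      exact hcard
    rw [sdiff_eq_empty_iff_subset] at hHI hIH
    rw [subset_antisymm hIH hHI]
  set m := (H \ I).inf' hHI f
  calc ∑ i ∈ I, f i ≤ ∑ i ∈ I ∩ H, f i + #(I \ H) • m := by
        rw [← sum_inter_add_sum_sdiff I H]
        gcongr
        refine sum_le_card_nsmul _ _ _ fun j hj => le_inf' hHI _ fun i hi => ?_
        exact htop i (mem_sdiff.1 hi).1 j (mem_sdiff.1 hj).2
    _ ≤ ∑ i ∈ H ∩ I, f i + #(H \ I) • m := by
        rw [inter_comm]
        have hm : 0 ≤ m := le_inf' hHI _ fun i _ => hf i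
        grw [nsmul_le_nsmul_left hm (card_sdiff_le_card_sdiff_iff.2 hcard)]
    _ ≤ ∑ i ∈ H, f i := by
        rw [← sum_inter_add_sum_sdiff H I]
        gcongr
        exact card_nsmul_le_sum _ _ _ fun i hi => inf'_le f hi

lemma sum_sq_compl_le_tailNorm_sq {d k : ℕ} {z : Fin d → ℝ} {H : Finset (Fin d)}
    (hHcard : #H = k) (hHtop : ∀ i ∈ H, ∀ j ∉ H, |z j| ≤ |z i|) :
    ∑ i ∈ Hᶜ, z i ^ 2 ≤ tailNorm k z ^ 2 := by
  have hbound : ∀ w : Fin d → ℝ, sparse k w → ∑ i ∈ Hᶜ, z i ^ 2 ≤ ∑ i, (z i - w i) ^ 2 := by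
    rintro w ⟨I, hIcard, hIw⟩
    have hIH : ∑ i ∈ I, z i ^ 2 ≤ ∑ i ∈ H, z i ^ 2 :=
      sum_le_sum_of_card_le_of_forall_le (fun i => sq_nonneg (z i)) (hHcard ▸ hIcard)
        fun i hi j hj => sq_le_sq.2 (hHtop i hi j hj)
    calc ∑ i ∈ Hᶜ, z i ^ 2 ≤ ∑ i ∈ Iᶜ, z i ^ 2 := by
          have := sum_add_sum_compl H fun i => z i ^ 2
          have := sum_add_sum_compl I fun i => z i ^ 2
          linarith
      _ = ∑ i ∈ Iᶜ, (z i - w i) ^ 2 :=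
          sum_congr rfl fun i hi => by rw [hIw i (mem_compl.1 hi), sub_zero]
      _ ≤ ∑ i, (z i - w i) ^ 2 :=
          sum_le_univ_sum_of_nonneg fun i => sq_nonneg _
  have hsqrt : √(∑ i ∈ Hᶜ, z i ^ 2) ≤ tailNorm k z := by
    refine le_csInf ⟨_, 0, ⟨∅, by simp⟩, rfl⟩ ?_
    rintro _ ⟨w, hw, rfl⟩
    exact Real.sqrt_le_sqrt (hbound w hw)
  exact (Real.sqrt_le_iff.1 hsqrt).2

lemma Fintype.sum_eq_zero_of_comp_eq_neg {X : Type*} [Fintype X] (e : X ≃ X) {f : X → ℝ}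
    (hf : ∀ x, f (e x) = -f x) : ∑ x, f x = 0 := by
  have := e.sum_comp f
  simp only [hf, sum_neg_distrib] at this
  linarith

lemma sgn_mul_self (b : Bool) : sgn b * sgn b = 1 := by cases b <;> simp [sgn]

lemma sgn_not (b : Bool) : sgn (!b) = -sgn b := by cases b <;> simp [sgn]

namespace SketchSpace

variable {d P C : ℕ}

def flipSign (p : Fin P) (j : Fin d) : SketchSpace d P C ≃ SketchSpace d P C where
  toFun ω := (ω.1, fun p' j' => xor (ω.2 p' j') (decide (p' = p ∧ j' = j)))
  invFun ω := (ω.1, fun p' j' => xor (ω.2 p' j') (decide (p' = p ∧ j' = j)))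
  left_inv ω := by simp
  right_inv ω := by simp

lemma flipSign_fst (p : Fin P) (j : Fin d) (ω : SketchSpace d P C) : (flipSign p j ω).1 = ω.1 :=
  rfl

lemma flipSign_snd_self (p : Fin P) (j : Fin d) (ω : SketchSpace d P C) :
    (flipSign p j ω).2 p j = !ω.2 p j := by
  simp [flipSign]

lemma flipSign_snd_of_ne {p p' : Fin P} {j j' : Fin d} (h : (j', p') ≠ (j, p))
    (ω : SketchSpace d P C) : (flipSign p j ω).2 p' j' = ω.2 p' j' := by
  have hne : ¬(p' = p ∧ j' = j) := fun ⟨hp, hj⟩ => h (by rw [hp, hj])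
  simp only [flipSign, Equiv.coe_fn_mk, decide_eq_false hne, Bool.xor_false]

def collisionTerm (z : Fin d → ℝ) (q j : Fin d) (p : Fin P) (ω : SketchSpace d P C) : ℝ :=
  sgn (ω.2 p j) * sgn (ω.2 p q) * (if ω.1 p j = ω.1 p q then 1 else 0) * z j

def sketchError (z : Fin d → ℝ) (q : Fin d) (T : Finset (Fin d)) (ω : SketchSpace d P C) : ℝ :=
  (P : ℝ)⁻¹ * ∑ j ∈ T, ∑ p : Fin P, collisionTerm z q j p ω

variable {z : Fin d → ℝ} {q j j' : Fin d} {p p' : Fin P} {T : Finset (Fin d)}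

lemma collisionTerm_self (ω : SketchSpace d P C) : collisionTerm z q q p ω = z q := by
  simp [collisionTerm, sgn_mul_self]

lemma collisionTerm_sq (ω : SketchSpace d P C) :
    collisionTerm z q j p ω ^ 2 = if ω.1 p j = ω.1 p q then z j ^ 2 else 0 := by
  have h₁ := sgn_mul_self (ω.2 p j)
  have h₂ := sgn_mul_self (ω.2 p q)
  split_ifs with h <;> simp only [collisionTerm, h, if_true, if_false]
  · linear_combination (sgn (ω.2 p q) ^ 2 * z j ^ 2) * h₁ + z j ^ 2 * h₂
  · ring

lemma SkT_Sk_apply (ω : SketchSpace d P C) :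
    SkT ω (Sk ω z) q = (P : ℝ)⁻¹ * ∑ j, ∑ p : Fin P, collisionTerm z q j p ω := by
  have hP : (√(P : ℝ))⁻¹ * (√(P : ℝ))⁻¹ = (P : ℝ)⁻¹ := by
    rw [← mul_inv, Real.mul_self_sqrt (Nat.cast_nonneg P)]
  simp only [SkT, Sk, collisionTerm, Finset.mul_sum, ← hP]
  rw [Finset.sum_comm]
  refine Finset.sum_congr rfl fun p _ => Finset.sum_congr rfl fun i _ => ?_
  ring

lemma SkT_Sk_sub_self (hP : P ≠ 0) (ω : SketchSpace d P C) :
    SkT ω (Sk ω z) q - z q = sketchError z q (univ.erase q) ω := by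
  rw [SkT_Sk_apply, ← add_sum_erase _ _ (mem_univ q), sketchError, mul_add]
  simp [collisionTerm_self, hP]

lemma sketchError_union {S T : Finset (Fin d)} (h : Disjoint S T) (ω : SketchSpace d P C) :
    sketchError z q (S ∪ T) ω = sketchError z q S ω + sketchError z q T ω := by
  rw [sketchError, sum_union h, mul_add]
  rfl

lemma collisionTerm_flipSign_self (hjq : j ≠ q) (ω : SketchSpace d P C) :
    collisionTerm z q j p (flipSign p j ω) = -collisionTerm z q j p ω := by
  rw [collisionTerm, collisionTerm, flipSign_fst, flipSign_snd_self,
    flipSign_snd_of_ne (by simp [hjq.symm]), sgn_not]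
  ring

lemma collisionTerm_flipSign_of_ne (hjq : j ≠ q) (h : (j', p') ≠ (j, p)) (ω : SketchSpace d P C) :
    collisionTerm z q j' p' (flipSign p j ω) = collisionTerm z q j' p' ω := by
  rw [collisionTerm, collisionTerm, flipSign_fst, flipSign_snd_of_ne h]
  by_cases hp : p' = p
  · rw [flipSign_snd_of_ne (by simp [hjq.symm])]
  · rw [flipSign_snd_of_ne (by simp [hp])]

lemma sum_collisionTerm_eq_zero (hjq : j ≠ q) :
    ∑ ω : SketchSpace d P C, collisionTerm z q j p ω = 0 :=
  Fintype.sum_eq_zero_of_comp_eq_neg (flipSign p j) (collisionTerm_flipSign_self hjq)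

lemma sum_collisionTerm_mul_eq_zero (hjq : j ≠ q) (h : (j', p') ≠ (j, p)) :
    ∑ ω : SketchSpace d P C, collisionTerm z q j p ω * collisionTerm z q j' p' ω = 0 :=
  Fintype.sum_eq_zero_of_comp_eq_neg (flipSign p j) fun ω => by
    rw [collisionTerm_flipSign_self hjq, collisionTerm_flipSign_of_ne hjq h, neg_mul]

section UniformHash

variable [NeZero C]

def shiftHash (p : Fin P) (j : Fin d) (c : Fin C) : SketchSpace d P C ≃ SketchSpace d P C :=
  (Equiv.addRight (Pi.single p (Pi.single j c))).prodCongr (Equiv.refl _)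

lemma card_hash_sub_eq_card_hash_eq (p : Fin P) {j q : Fin d} (hjq : j ≠ q) (c : Fin C) :
    #{ω : SketchSpace d P C | ω.1 p j - ω.1 p q = c} =
      #{ω : SketchSpace d P C | ω.1 p j = ω.1 p q} :=
  card_equiv (shiftHash p j (-c)) fun ω => by
    simp [shiftHash, hjq.symm, sub_eq_iff_eq_add', add_neg_eq_iff_eq_add]

lemma mul_card_hash_eq_card (p : Fin P) {j q : Fin d} (hjq : j ≠ q) :
    C * #{ω : SketchSpace d P C | ω.1 p j = ω.1 p q} = Fintype.card (SketchSpace d P C) := by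
  calc C * #{ω : SketchSpace d P C | ω.1 p j = ω.1 p q}
      = ∑ c : Fin C, #{ω : SketchSpace d P C | ω.1 p j - ω.1 p q = c} := by
        simp [card_hash_sub_eq_card_hash_eq p hjq]
    _ = Fintype.card (SketchSpace d P C) :=
        (card_eq_sum_card_fiberwise fun _ _ => mem_univ _).symm

lemma sum_collisionTerm_sq (hjq : j ≠ q) :
    ∑ ω : SketchSpace d P C, collisionTerm z q j p ω ^ 2 =
      z j ^ 2 * Fintype.card (SketchSpace d P C) / C := by
  have hC : (C : ℝ) ≠ 0 := Nat.cast_ne_zero.2 (NeZero.ne C)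
  rw [← mul_card_hash_eq_card p hjq, Nat.cast_mul, mul_div_assoc, mul_div_cancel_left₀ _ hC]
  simp [collisionTerm_sq, sum_ite, mul_comm]

lemma unifMeasure_hash_eq_inv (hjq : j ≠ q) :
    unifMeasure (SketchSpace d P C) {ω | ω.1 p j = ω.1 p q} = (C : ℝ≥0∞)⁻¹ := by
  have hcard := mul_card_hash_eq_card (d := d) (C := C) p hjq
  have hs : #{ω : SketchSpace d P C | ω.1 p j = ω.1 p q} ≠ 0 := by
    intro h
    rw [h, mul_zero] at hcard
    exact Fintype.card_ne_zero hcard.symm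
  have hC : (C : ℝ≥0∞) ≠ 0 := Nat.cast_ne_zero.2 (NeZero.ne C)
  rw [← coe_filter_univ, unifMeasure_coe_finset, ← hcard, Nat.cast_mul,
    ENNReal.mul_inv (.inl hC) (.inl (ENNReal.natCast_ne_top C)), mul_assoc,
    ENNReal.inv_mul_cancel (Nat.cast_ne_zero.2 hs) (ENNReal.natCast_ne_top _), mul_one]

lemma integral_sketchError (hq : q ∉ T) :
    ∫ ω, sketchError z q T ω ∂unifMeasure (SketchSpace d P C) = 0 := by
  have hterm : ∀ j ∈ T, ∀ p : Fin P,
      ∫ ω, collisionTerm z q j p ω ∂unifMeasure (SketchSpace d P C) = 0 := fun j hj p => by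
    rw [integral_unifMeasure, sum_collisionTerm_eq_zero (ne_of_mem_of_not_mem hj hq), mul_zero]
  simp only [sketchError, integral_const_mul, integral_finsetSum _ fun _ _ => Integrable.of_finite]
  rw [sum_eq_zero fun j hj => sum_eq_zero fun p _ => hterm j hj p, mul_zero]

lemma integral_sketchError_sq (hq : q ∉ T) :
    ∫ ω, sketchError z q T ω ^ 2 ∂unifMeasure (SketchSpace d P C) =
      (∑ j ∈ T, z j ^ 2) / (P * C) := by
  set X : Fin d × Fin P → SketchSpace d P C → ℝ := fun u => collisionTerm z q u.1 u.2
  have hsq : ∀ ω, sketchError z q T ω ^ 2 =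
      (P : ℝ)⁻¹ ^ 2 * ∑ u ∈ T ×ˢ univ, ∑ v ∈ T ×ˢ univ, X u ω * X v ω := by
    intro ω
    rw [sketchError, mul_pow, sq (∑ j ∈ T, _), ← sum_product' (f := fun j p => X (j, p) ω),
      sum_mul_sum]
  have hdiag : ∀ u ∈ T ×ˢ (univ : Finset (Fin P)),
      ∑ v ∈ T ×ˢ univ, ∑ ω, X u ω * X v ω =
        z u.1 ^ 2 * Fintype.card (SketchSpace d P C) / C := by
    intro u hu
    have huq : u.1 ≠ q := fun h => hq (h ▸ (mem_product.1 hu).1)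
    rw [sum_eq_single_of_mem u hu fun v _ hvu => sum_collisionTerm_mul_eq_zero huq hvu]
    simpa only [sq] using sum_collisionTerm_sq (z := z) (C := C) (p := u.2) huq
  simp only [hsq, integral_const_mul, integral_finsetSum _ fun _ _ => Integrable.of_finite]
  simp only [integral_unifMeasure, ← mul_sum]
  rw [sum_congr rfl hdiag, sum_product]
  simp only [sum_const, card_univ, Fintype.card_fin, nsmul_eq_mul, ← mul_sum, ← sum_div, ← sum_mul]
  rcases eq_or_ne (P : ℝ) 0 with hP | hP
  · simp [hP]
  · field_simp

lemma unifMeasure_sketchError_ne_zero_le (hq : q ∉ T) :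
    unifMeasure (SketchSpace d P C) {ω | sketchError z q T ω ≠ 0} ≤ #T * P / C := by
  have hsub : {ω : SketchSpace d P C | sketchError z q T ω ≠ 0} ⊆
      ⋃ j ∈ T, ⋃ p : Fin P, {ω | ω.1 p j = ω.1 p q} := by
    intro ω hω
    contrapose! hω
    simp only [Set.mem_iUnion, Set.mem_ofPred_eq, not_exists] at hω
    rw [Set.notMem_ofPred_iff, not_not, sketchError]
    exact mul_eq_zero_of_right _ <| sum_eq_zero fun j hj => sum_eq_zero fun p _ => by
      simp [collisionTerm, hω j hj p]
  calc unifMeasure (SketchSpace d P C) {ω | sketchError z q T ω ≠ 0}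
      ≤ ∑ j ∈ T, ∑ p : Fin P, unifMeasure (SketchSpace d P C) {ω | ω.1 p j = ω.1 p q} :=
        (measure_mono hsub).trans <| (measure_biUnion_finset_le _ _).trans <|
          sum_le_sum fun _ _ => measure_iUnion_fintype_le _ _
    _ = #T * P / C := by
        rw [sum_congr rfl fun j hj => sum_congr rfl fun p _ =>
          unifMeasure_hash_eq_inv (ne_of_mem_of_not_mem hj hq)]
        simp [div_eq_mul_inv, mul_assoc]

end UniformHash

end SketchSpace

open SketchSpace in
theorem count_mean_sketch_error_decomposition_general
    {d P C k : ℕ} (hP : 1 ≤ P) (hC : 1 ≤ C)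
    (z : Fin d → ℝ) (q : Fin d)
    (H : Finset (Fin d)) (hHcard : H.card = k)
    (hHtop : ∀ i ∈ H, ∀ j ∉ H, |z j| ≤ |z i|)
    (EH ET : SketchSpace d P C → ℝ)
    (hEH : EH = fun ω => (P : ℝ)⁻¹ * ∑ j ∈ H.erase q, ∑ p : Fin P,
      sgn (ω.2 p j) * sgn (ω.2 p q) * (if ω.1 p j = ω.1 p q then (1 : ℝ) else 0) * z j)
    (hET : ET = fun ω => (P : ℝ)⁻¹ * ∑ j ∈ Hᶜ.erase q, ∑ p : Fin P,
      sgn (ω.2 p j) * sgn (ω.2 p q) * (if ω.1 p j = ω.1 p q then (1 : ℝ) else 0) * z j) :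
    (∀ ω : SketchSpace d P C, SkT ω (Sk ω z) q - z q = EH ω + ET ω) ∧
    unifMeasure (SketchSpace d P C) {ω | EH ω ≠ 0} ≤ ENNReal.ofReal ((P * k : ℝ) / C) ∧
    ∫ ω, ET ω ∂(unifMeasure (SketchSpace d P C)) = 0 ∧
    ∫ ω, ET ω ^ 2 ∂(unifMeasure (SketchSpace d P C)) ≤ tailNorm k z ^ 2 / (P * C) := by
  have : NeZero C := ⟨by omega⟩
  obtain rfl : EH = sketchError z q (H.erase q) := hEH
  obtain rfl : ET = sketchError z q (Hᶜ.erase q) := hET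
  have hqH : q ∉ H.erase q := notMem_erase q H
  have hqT : q ∉ Hᶜ.erase q := notMem_erase q Hᶜ
  refine ⟨fun ω => ?_, ?_, integral_sketchError hqT, ?_⟩
  · have hdisj : Disjoint (H.erase q) (Hᶜ.erase q) :=
      disjoint_compl_right.mono (erase_subset q H) (erase_subset q Hᶜ)
    rw [SkT_Sk_sub_self (by omega), ← union_compl H, erase_union_distrib, sketchError_union hdisj]
  · calc _ ≤ (#(H.erase q) * P / C : ℝ≥0∞) := unifMeasure_sketchError_ne_zero_le hqH
      _ ≤ k * P / C := by gcongr; exact hHcard ▸ card_erase_le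
      _ = ENNReal.ofReal ((P * k : ℝ) / C) := by
        rw [ENNReal.ofReal_div_of_pos (by positivity), ENNReal.ofReal_mul (by positivity)]
        simp [mul_comm]
  · rw [integral_sketchError_sq hqT]
    gcongr
    exact (sum_le_sum_of_subset_of_nonneg (erase_subset q Hᶜ) fun i _ _ => sq_nonneg (z i)).trans
      (sum_sq_compl_le_tailNorm_sq hHcard hHtop)

/-- decomposition of the per-coordinate error of a count-mean sketch
into a heavy part `E_H` and a tail part `E_T`, with `P(E_H ≠ 0) ≤ Pk/C`,
`E[E_T] = 0` and `E[E_T²] ≤ ‖z_tail(k)‖²/(PC)`. -/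
theorem count_mean_sketch_error_decomposition
    {d P C k : ℕ} (hd : 1 ≤ d) (hP : 1 ≤ P) (hC : 1 ≤ C) (hk : 1 ≤ k) (hkd : k ≤ d)
    (z : Fin d → ℝ) (q : Fin d)
    (H : Finset (Fin d)) (hHcard : H.card = k)
    (hHtop : ∀ i ∈ H, ∀ j ∉ H, |z j| ≤ |z i|)
    (EH ET : SketchSpace d P C → ℝ)
    (hEH : EH = fun ω => (P : ℝ)⁻¹ * ∑ j ∈ H.erase q, ∑ p : Fin P,
      sgn (ω.2 p j) * sgn (ω.2 p q) * (if ω.1 p j = ω.1 p q then (1 : ℝ) else 0) * z j)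
    (hET : ET = fun ω => (P : ℝ)⁻¹ * ∑ j ∈ Hᶜ.erase q, ∑ p : Fin P,
      sgn (ω.2 p j) * sgn (ω.2 p q) * (if ω.1 p j = ω.1 p q then (1 : ℝ) else 0) * z j) :
    (∀ ω : SketchSpace d P C, SkT ω (Sk ω z) q - z q = EH ω + ET ω) ∧
    unifMeasure (SketchSpace d P C) {ω | EH ω ≠ 0} ≤ ENNReal.ofReal ((P * k : ℝ) / C) ∧
    ∫ ω, ET ω ∂(unifMeasure (SketchSpace d P C)) = 0 ∧
    ∫ ω, ET ω ^ 2 ∂(unifMeasure (SketchSpace d P C)) ≤ tailNorm k z ^ 2 / (P * C) :=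
  count_mean_sketch_error_decomposition_general hP hC z q H hHcard hHtop EH ET hEH hET
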